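/- arXiv:1403.2987 — 6 statements merged into one kernel-verified Lean document; each statement's English description precedes it below -/
import Mathlib

section
/- For every integer n ≥ 2, the polynomial LT_n(x) = x^{2n} - x^{n+1} - x^n - x^{n-1} + 1 has a unique real root λ_n with λ_n > 1. -/
private lemma pow_sub_le_aux {a b : ℝ} (ha : 1 ≤ a) (hab : a ≤ b) :
    ∀ k : ℕ, 1 ≤ k → b - a ≤ b ^ k - a ^ k := by
  intro k hk
  induction k with
  | zero => omega
  | succ m ih =>
    rcases Nat.lt_or_ge m 1 with h | h
    · interval_cases m; simp
    · have hmm := ih h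
      have hb1 : (1:ℝ) ≤ b := le_trans ha hab
      have h1 : (1:ℝ) ≤ a ^ m := one_le_pow₀ ha
      have h2 : a ^ m ≤ b ^ m := pow_le_pow_left₀ (by linarith) hab m
      have e1 : b ^ (m+1) = b * b ^ m := by ring
      have e2 : a ^ (m+1) = a * a ^ m := by ring
      nlinarith

private lemma pow_sub_lt_aux {a b : ℝ} (ha : 1 < a) (hab : a < b) {n : ℕ} (hn : 2 ≤ n) :
    b - a < b ^ n - a ^ n := by
  obtain ⟨k, rfl⟩ : ∃ k, n = k + 1 := ⟨n - 1, by omega⟩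
  have hk : 1 ≤ k := by omega
  have hw := pow_sub_le_aux ha.le hab.le k hk
  have h1 : (1:ℝ) < a ^ k := one_lt_pow₀ ha (by omega)
  have h2 : a ^ k ≤ b ^ k := pow_le_pow_left₀ (by linarith) hab.le k
  have e1 : b ^ (k+1) = b * b ^ k := by ring
  have e2 : a ^ (k+1) = a * a ^ k := by ring
  nlinarith

private lemma F_mono (n : ℕ) (hn : 2 ≤ n) {a b : ℝ} (ha : 1 < a) (hab : a < b) :
    a ^ n - a - 1 - a⁻¹ + (a ^ n)⁻¹ < b ^ n - b - 1 - b⁻¹ + (b ^ n)⁻¹ := by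
  have ha0 : (0:ℝ) < a := by linarith
  have hb0 : (0:ℝ) < b := by linarith
  have hb1 : (1:ℝ) < b := lt_trans ha hab
  have han : (0:ℝ) < a ^ n := pow_pos ha0 n
  have hbn : (0:ℝ) < b ^ n := pow_pos hb0 n
  have hab1 : (1:ℝ) < a * b := by nlinarith
  have habn : a * b ≤ a ^ n * b ^ n := by
    rw [← mul_pow]; exact le_self_pow₀ hab1.le (by omega)
  have key : (b ^ n - b - 1 - b⁻¹ + (b ^ n)⁻¹) - (a ^ n - a - 1 - a⁻¹ + (a ^ n)⁻¹)
      = (b ^ n - a ^ n) * (1 - (a ^ n * b ^ n)⁻¹) - (b - a) * (1 - (a * b)⁻¹) := by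
    field_simp
    ring
  have hX : b - a < b ^ n - a ^ n := pow_sub_lt_aux ha hab hn
  have hx : (0:ℝ) < b - a := by linarith
  have hy : (0:ℝ) < 1 - (a * b)⁻¹ := by
    have : (a*b)⁻¹ < 1 := inv_lt_one_of_one_lt₀ hab1
    linarith
  have hY : 1 - (a * b)⁻¹ ≤ 1 - (a ^ n * b ^ n)⁻¹ := by
    have : (a ^ n * b ^ n)⁻¹ ≤ (a * b)⁻¹ := inv_anti₀ (by linarith) habn
    linarith
  nlinarith [key]

private lemma F_eq (n : ℕ) (hn : 2 ≤ n) {x : ℝ} (hx : 0 < x) :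
    x ^ (2*n) - x ^ (n+1) - x ^ n - x ^ (n-1) + 1
      = x ^ n * (x ^ n - x - 1 - x⁻¹ + (x ^ n)⁻¹) := by
  obtain ⟨m, rfl⟩ : ∃ m, n = m + 1 := ⟨n - 1, by omega⟩
  have hx' : x ≠ 0 := ne_of_gt hx
  simp only [Nat.add_sub_cancel]
  field_simp
  ring

theorem LT_unique_root_gt_one (n : ℕ) (hn : 2 ≤ n) :
    ∃! lam : ℝ, 1 < lam ∧
      lam ^ (2 * n) - lam ^ (n + 1) - lam ^ n - lam ^ (n - 1) + 1 = 0 := by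
  set F : ℝ → ℝ := fun x => x ^ n - x - 1 - x⁻¹ + (x ^ n)⁻¹ with hF
  have hiff : ∀ x : ℝ, 1 < x →
      (x ^ (2*n) - x ^ (n+1) - x ^ n - x ^ (n-1) + 1 = 0 ↔ F x = 0) := by
    intro x hx
    have hx0 : (0:ℝ) < x := by linarith
    have hxn : x ^ n ≠ 0 := ne_of_gt (pow_pos hx0 n)
    rw [F_eq n hn hx0]
    simp [hF, mul_eq_zero, hxn]
  -- existence via IVT on [1,2]
  have hcont : ContinuousOn F (Set.Icc 1 2) := by
    have h0 : ∀ x ∈ Set.Icc (1:ℝ) 2, x ≠ 0 := fun x hx => by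
      have := hx.1; intro h; rw [h] at this; linarith
    have hn0 : ∀ x ∈ Set.Icc (1:ℝ) 2, x ^ n ≠ 0 := fun x hx =>
      pow_ne_zero n (h0 x hx)
    exact ((((continuous_pow n).continuousOn.sub continuous_id.continuousOn).sub
      continuousOn_const).sub (continuousOn_id.inv₀ h0)).add
      ((continuous_pow n).continuousOn.inv₀ hn0)
  have hF1 : F 1 = -1 := by simp [hF]
  have hF2 : 0 < F 2 := by
    have h4 : (4:ℝ) ≤ 2 ^ n := by
      calc (4:ℝ) = 2 ^ 2 := by norm_num
      _ ≤ 2 ^ n := pow_le_pow_right₀ one_le_two hn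
    have : (0:ℝ) < (2 ^ n : ℝ)⁻¹ := by positivity
    simp only [hF]
    norm_num
    nlinarith
  have h0mem : (0:ℝ) ∈ Set.Ioo (F 1) (F 2) := by rw [hF1]; exact ⟨by norm_num, hF2⟩
  obtain ⟨c, hc, hFc⟩ := intermediate_value_Ioo (by norm_num : (1:ℝ) ≤ 2) hcont h0mem
  refine ⟨c, ⟨hc.1, (hiff c hc.1).2 hFc⟩, ?_⟩
  rintro d ⟨hd1, hd0⟩
  have hFd : F d = 0 := (hiff d hd1).1 hd0
  have hFc' : c ^ n - c - 1 - c⁻¹ + (c ^ n)⁻¹ = 0 := hFc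
  have hFd' : d ^ n - d - 1 - d⁻¹ + (d ^ n)⁻¹ = 0 := hFd
  rcases lt_trichotomy d c with h | h | h
  · have := F_mono n hn hd1 h
    linarith
  · exact h
  · have := F_mono n hn hc.1 h
    linarith
end

section
/- For every integer n ≥ 2, the largest real root λ_n of LT_n(x) = x^{2n} - x^{n+1} - x^n - x^{n-1} + 1 satisfies λ_n^n > γ_0^2, where γ_0 = (1+√5)/2 is the golden ratio. -/
theorem LT_root_pow_gt_golden_sq (n : ℕ) (hn : 2 ≤ n) (lam : ℝ)
    (hlam : 1 < lam)
    (hroot : lam ^ (2 * n) - lam ^ (n + 1) - lam ^ n - lam ^ (n - 1) + 1 = 0) :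
    lam ^ n > ((1 + Real.sqrt 5) / 2) ^ 2 := by
  have hl0 : (0:ℝ) < lam := lt_trans one_pos hlam
  set y := lam ^ n with hy
  have hn1 : n - 1 + 1 = n := by omega
  have e1 : lam ^ (2*n) = y^2 := by rw [mul_comm, pow_mul, hy, sq]
  have e2 : lam ^ (n+1) = y * lam := by rw [pow_succ, hy]
  have e3 : lam ^ (n-1) * lam = y := by rw [← pow_succ, hn1]
  have hy1 : 1 < y := one_lt_pow₀ hlam (by omega)
  rw [e1, e2] at hroot
  have h4 : y = (y^2 - y*lam - y + 1) * lam := by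
    have : lam ^ (n-1) = y^2 - y*lam - y + 1 := by linarith
    conv_rhs => rw [← this, e3]
  have key : y^2 - 3*y + 1 > 0 := by nlinarith [mul_pos hl0 (mul_pos hl0 hl0), sq_nonneg (lam - 1), mul_pos (mul_pos hl0 hl0) (lt_trans one_pos hy1)]
  have hs : Real.sqrt 5 ^ 2 = 5 := Real.sq_sqrt (by norm_num)
  have hs2 : (2:ℝ) < Real.sqrt 5 := by nlinarith [Real.sqrt_nonneg 5]
  nlinarith [key, hy1, hs, hs2, mul_pos (sub_pos.mpr hy1) (sub_pos.mpr hs2)]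
end

section
/- If λ_n denotes the largest real root of LT_n(x) = x^{2n} - x^{n+1} - x^n - x^{n-1} + 1, then the sequence (λ_n)^n converges to γ_0^2 = (3+√5)/2 as n → ∞. -/
/-!
Put `y = λ^n`. Dividing `LT_n(λ) = 0` by `λ^n` gives `y + y⁻¹ = λ + 1 + λ⁻¹`, and `φ²` is the
solution above `1` of `z + z⁻¹ = 3`. Since `y ↦ y + y⁻¹` has slope at least `1/2` on the relevant
range, `|λ^n - φ²| ≤ 2 (λ + λ⁻¹ - 2) ≤ 2 (λ - 1)`, while Bernoulli's inequality and the bound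
`λ^n < 4` give `λ - 1 < 3 / n`. Hence `|λ^n - φ²| < 6 / n`.
-/

open Filter Real
open scoped goldenRatio

def LTn (n : ℕ) (x : ℝ) : ℝ :=
  x ^ (2 * n) - x ^ (n + 1) - x ^ n - x ^ (n - 1) + 1

lemma LTn_eq_pow_mul {n : ℕ} {x : ℝ} (hx : x ≠ 0) (hn : 1 ≤ n) :
    LTn n x = x ^ n * (x ^ n + (x ^ n)⁻¹ - (x + 1 + x⁻¹)) := by
  obtain ⟨m, rfl⟩ := Nat.exists_eq_add_of_le' hn
  have hxm : x ^ m ≠ 0 := pow_ne_zero m hx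
  simp only [LTn, Nat.add_sub_cancel]
  field_simp
  ring

lemma pow_add_inv_pow_eq_of_LTn_eq_zero {n : ℕ} {x : ℝ} (hx : x ≠ 0) (hn : 1 ≤ n)
    (h : LTn n x = 0) : x ^ n + (x ^ n)⁻¹ = x + 1 + x⁻¹ := by
  rw [LTn_eq_pow_mul hx hn, mul_eq_zero] at h
  exact sub_eq_zero.mp (h.resolve_left (pow_ne_zero n hx))

section PowAddInvPow

variable {n : ℕ} {x : ℝ}

lemma pow_lt_four_of_pow_add_inv_pow_eq (hx : 1 < x) (hn : 2 ≤ n)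
    (h : x ^ n + (x ^ n)⁻¹ = x + 1 + x⁻¹) : x ^ n < 4 := by
  have hinv : x⁻¹ < 1 := inv_lt_one_of_one_lt₀ hx
  have hpow : 0 < (x ^ n)⁻¹ := by positivity
  have hsq : x ^ 2 ≤ x ^ n := pow_le_pow_right₀ hx.le hn
  have hlt : x ^ n < x + 2 := by linarith
  nlinarith

lemma sub_one_lt_three_div_of_pow_add_inv_pow_eq (hx : 1 < x) (hn : 2 ≤ n)
    (h : x ^ n + (x ^ n)⁻¹ = x + 1 + x⁻¹) : x - 1 < 3 / n := by
  have hbern : 1 + n * (x - 1) ≤ x ^ n := one_add_mul_sub_le_pow (by linarith) n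
  have hn0 : (0 : ℝ) < n := by positivity
  rw [lt_div_iff₀ hn0]
  linarith [pow_lt_four_of_pow_add_inv_pow_eq hx hn h]

end PowAddInvPow

lemma abs_sub_le_two_mul_abs_add_inv_sub_add_inv {y z : ℝ} (hy : 0 < y) (hz : 0 < z)
    (hyz : 2 ≤ y * z) : |y - z| ≤ 2 * |(y + y⁻¹) - (z + z⁻¹)| := by
  have hfactor : (y + y⁻¹) - (z + z⁻¹) = (y - z) * (1 - (y * z)⁻¹) := by
    field_simp
    ring
  have hslope : 1 / 2 ≤ 1 - (y * z)⁻¹ := by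
    have : (y * z)⁻¹ ≤ 2⁻¹ := inv_anti₀ two_pos hyz
    linarith
  rw [hfactor, abs_mul, abs_of_pos (by linarith : 0 < 1 - (y * z)⁻¹)]
  nlinarith [abs_nonneg (y - z)]

lemma goldenRatio_sq_add_inv : φ ^ 2 + (φ ^ 2)⁻¹ = 3 := by
  rw [← inv_pow, inv_goldenRatio, neg_sq, goldenConj_sq, goldenRatio_sq]
  linarith [goldenRatio_add_goldenConj]

lemma abs_pow_sub_goldenRatio_sq_lt {n : ℕ} {x : ℝ} (hx : 1 < x) (hn : 2 ≤ n)
    (h : LTn n x = 0) : |x ^ n - φ ^ 2| < 6 / n := by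
  have hrel := pow_add_inv_pow_eq_of_LTn_eq_zero (by positivity) (by omega) h
  have hy : 1 < x ^ n := one_lt_pow₀ hx (by omega)
  have hφ : 2 < φ ^ 2 := by rw [goldenRatio_sq]; linarith [one_lt_goldenRatio]
  have hdist : x + 1 + x⁻¹ - 3 ≤ x - 1 := by
    have : x⁻¹ < 1 := inv_lt_one_of_one_lt₀ hx
    linarith
  have hnonneg : 0 ≤ x + 1 + x⁻¹ - 3 := by
    have : x + x⁻¹ - 2 = (x - 1) ^ 2 / x := by field_simp; ring
    have : 0 ≤ (x - 1) ^ 2 / x := by positivity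
    linarith
  calc |x ^ n - φ ^ 2|
      ≤ 2 * |(x ^ n + (x ^ n)⁻¹) - (φ ^ 2 + (φ ^ 2)⁻¹)| :=
        abs_sub_le_two_mul_abs_add_inv_sub_add_inv (by linarith) (by linarith) (by nlinarith)
    _ = 2 * (x + 1 + x⁻¹ - 3) := by rw [hrel, goldenRatio_sq_add_inv, abs_of_nonneg hnonneg]
    _ ≤ 2 * (x - 1) := by linarith
    _ < 6 / n := by
        have := sub_one_lt_three_div_of_pow_add_inv_pow_eq hx hn hrel
        rw [show (6 : ℝ) / n = 2 * (3 / n) by ring]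
        linarith

theorem LT_root_pow_tendsto_golden_sq (lam : ℕ → ℝ)
    (hlam : ∀ n, 2 ≤ n → 1 < lam n ∧
      (lam n) ^ (2 * n) - (lam n) ^ (n + 1) - (lam n) ^ n - (lam n) ^ (n - 1) + 1 = 0) :
    Tendsto (fun n => (lam n) ^ n) atTop (nhds (((1 + Real.sqrt 5) / 2) ^ 2)) := by
  change Tendsto _ atTop (nhds (φ ^ 2))
  rw [tendsto_iff_norm_sub_tendsto_zero]
  refine squeeze_zero' (Eventually.of_forall fun n => norm_nonneg _) ?_
    (tendsto_const_div_atTop_nhds_zero_nat 6)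
  filter_upwards [eventually_ge_atTop 2] with n hn
  exact (abs_pow_sub_goldenRatio_sq_lt (hlam n hn).1 hn (hlam n hn).2).le
end

section
/- If λ_n denotes the largest real root of LT_n(x) = x^{2n} - x^{n+1} - x^n - x^{n-1} + 1, then the sequence (λ_n)^n is strictly monotone decreasing in n. -/
/-!
Dividing `LT_n(x)` by `x^n` turns the root equation into `φ(x^n) - φ(x) = 1`, where
`φ(t) = t + t⁻¹`. Both `φ` and `ψ_n(x) = φ(x^n) - φ(x)` (for `n ≥ 2`) are strictly increasing
on `[1, ∞)`. For `m < n` this gives `ψ_n(λ_m) > ψ_m(λ_m) = 1 = ψ_n(λ_n)`, hence `λ_n < λ_m`, and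
then `φ(λ_n^n) = φ(λ_n) + 1 < φ(λ_m) + 1 = φ(λ_m^m)`, hence `λ_n^n < λ_m^m`.
-/

open Set

lemma add_inv_sub_add_inv {K : Type*} [Field K] {u v : K} (hu : u ≠ 0) (hv : v ≠ 0) :
    v + v⁻¹ - (u + u⁻¹) = (v - u) * (1 - (u * v)⁻¹) := by
  field_simp
  ring

lemma pow_add_inv_sub_add_inv_eq_one {K : Type*} [Field K] {x : K} {k : ℕ} (hx : x ≠ 0)
    (hk : 1 ≤ k) (h : x ^ (2 * k) - x ^ (k + 1) - x ^ k - x ^ (k - 1) + 1 = 0) :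
    x ^ k + (x ^ k)⁻¹ - (x + x⁻¹) = 1 := by
  obtain ⟨j, rfl⟩ : ∃ j, k = j + 1 := ⟨k - 1, by omega⟩
  rw [Nat.add_sub_cancel] at h
  have hxk : x ^ (j + 1) ≠ 0 := pow_ne_zero _ hx
  have : x ^ (j + 1) + (x ^ (j + 1))⁻¹ - (x + x⁻¹) - 1
      = (x ^ (2 * (j + 1)) - x ^ (j + 1 + 1) - x ^ (j + 1) - x ^ j + 1) * (x ^ (j + 1))⁻¹ := by
    field_simp
    ring
  rw [h, zero_mul, sub_eq_zero] at this
  exact this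

section OrderedField

variable {K : Type*} [Field K] [LinearOrder K] [IsStrictOrderedRing K]

lemma one_sub_inv_pos {t : K} (ht : 1 < t) : 0 < 1 - t⁻¹ :=
  sub_pos.2 (inv_lt_one_of_one_lt₀ ht)

lemma strictMonoOn_add_inv : StrictMonoOn (fun t : K => t + t⁻¹) (Ici 1) := by
  intro u (hu : 1 ≤ u) v _ huv
  have hv : 1 < v := hu.trans_lt huv
  have hdiff := add_inv_sub_add_inv (zero_lt_one.trans_le hu).ne' (zero_lt_one.trans hv).ne'
  have hpos := mul_pos (sub_pos.2 huv) (one_sub_inv_pos (one_lt_mul_of_le_of_lt hu hv))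
  simp only
  linarith

lemma sub_lt_pow_sub_pow {u v : K} {k : ℕ} (hu : 1 ≤ u) (huv : u < v) (hk : 2 ≤ k) :
    v - u < v ^ k - u ^ k := by
  obtain ⟨j, rfl⟩ : ∃ j, k = j + 1 := ⟨k - 1, by omega⟩
  have hv : 1 < v := hu.trans_lt huv
  have hvj : 0 < v ^ j - 1 := sub_pos.2 (one_lt_pow₀ hv (by omega))
  have : u * (u ^ j - 1) < v * (v ^ j - 1) :=
    calc u * (u ^ j - 1) ≤ u * (v ^ j - 1) := by gcongr
      _ < v * (v ^ j - 1) := mul_lt_mul_of_pos_right huv hvj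
  rw [pow_succ', pow_succ']
  linarith

lemma strictMonoOn_pow_add_inv_sub_add_inv {k : ℕ} (hk : 2 ≤ k) :
    StrictMonoOn (fun x : K => x ^ k + (x ^ k)⁻¹ - (x + x⁻¹)) (Ici 1) := by
  intro u (hu : 1 ≤ u) v _ huv
  have hv : 1 < v := hu.trans_lt huv
  have hu0 : u ≠ 0 := (zero_lt_one.trans_le hu).ne'
  have hv0 : v ≠ 0 := (zero_lt_one.trans hv).ne'
  have huv1 : 1 < u * v := one_lt_mul_of_le_of_lt hu hv
  have huvk : u * v ≤ u ^ k * v ^ k := by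
    rw [← mul_pow]
    exact le_self_pow₀ huv1.le (by omega)
  have hlin := sub_lt_pow_sub_pow hu huv hk
  have hinv : 1 - (u * v)⁻¹ ≤ 1 - (u ^ k * v ^ k)⁻¹ :=
    sub_le_sub_left (inv_anti₀ (zero_lt_one.trans huv1) huvk) 1
  have key : (v - u) * (1 - (u * v)⁻¹) < (v ^ k - u ^ k) * (1 - (u ^ k * v ^ k)⁻¹) :=
    calc (v - u) * (1 - (u * v)⁻¹) < (v ^ k - u ^ k) * (1 - (u * v)⁻¹) :=
          mul_lt_mul_of_pos_right hlin (one_sub_inv_pos huv1)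
      _ ≤ (v ^ k - u ^ k) * (1 - (u ^ k * v ^ k)⁻¹) :=
          mul_le_mul_of_nonneg_left hinv (by linarith)
  rw [← add_inv_sub_add_inv hu0 hv0,
    ← add_inv_sub_add_inv (pow_ne_zero k hu0) (pow_ne_zero k hv0)] at key
  simp only
  linarith

end OrderedField

theorem LT_root_pow_strict_anti (lam : ℕ → ℝ)
    (hlam : ∀ n, 2 ≤ n → 1 < lam n ∧
      (lam n) ^ (2 * n) - (lam n) ^ (n + 1) - (lam n) ^ n - (lam n) ^ (n - 1) + 1 = 0) :
    ∀ m n : ℕ, 2 ≤ m → m < n → (lam n) ^ n < (lam m) ^ m := by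
  intro m n hm hmn
  obtain ⟨ha, hrootm⟩ := hlam m hm
  obtain ⟨hb, hrootn⟩ := hlam n (by omega)
  have hψm := pow_add_inv_sub_add_inv_eq_one (by positivity) (by omega) hrootm
  have hψn := pow_add_inv_sub_add_inv_eq_one (by positivity) (by omega) hrootn
  have hφ {s t : ℝ} (hs : 1 ≤ s) (ht : 1 ≤ t) : s + s⁻¹ < t + t⁻¹ ↔ s < t :=
    strictMonoOn_add_inv.lt_iff_lt hs ht
  have hlam_lt : lam n < lam m := by
    have hφ_pow := (hφ (one_le_pow₀ ha.le) (one_le_pow₀ ha.le)).2 (pow_lt_pow_right₀ ha hmn)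
    exact ((strictMonoOn_pow_add_inv_sub_add_inv (k := n) (by omega)).lt_iff_lt hb.le ha.le).1
      (by linarith)
  have hφ_lam := (hφ hb.le ha.le).2 hlam_lt
  exact (hφ (one_le_pow₀ hb.le) (one_le_pow₀ ha.le)).1 (by linarith)
end

section
/- If M is an n×n Perron-Frobenius integer matrix with spectral radius λ and c denotes the number of edges minus the number of vertices of the associated digraph (c = sum of all entries of M minus n), then c ≤ λ^{2n} - 1. -/
/-!
Fix a vertex `x`, let `d u = ∑ v, M u v` be the out-degree of `u` and `r t = ∑ j, (M ^ t) x j`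
the number of walks of length `t` starting at `x`, so that
`r (t + 1) - r t = ∑ z, (M ^ t) x z * (d z - 1)`.
Every vertex lies on a cycle of length at most `n` and is reached from `x` by a walk of length
less than `n`, hence by a walk whose length lies in `[n, 2n)`. Summing the increments over that
window gives `r (2n) ≥ r n + ∑ u, (d u - 1) ≥ c + 1`. So all row sums of `M ^ (2n)` are at least
`c + 1`, those of `M ^ (2nm)` at least `(c + 1) ^ m`; since `M ^ k > 0`, such a row sum is at most
`tr (M ^ (2nm + k)) ≤ n λ ^ (2nm + k)`, and letting `m → ∞` yields `c + 1 ≤ λ ^ (2n)`.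
-/

open Polynomial Finset

theorem Nat.exists_add_mul_mem_Ico {a g : ℕ} (n : ℕ) (hg : 0 < g) (ha : a < n + g) :
    ∃ q, a + g * q ∈ Set.Ico n (n + g) := by
  have := Nat.div_add_mod (n + g - 1 - a) g
  have := Nat.mod_lt (n + g - 1 - a) hg
  exact ⟨(n + g - 1 - a) / g, by omega, by omega⟩

theorem le_of_forall_pow_le_mul_pow {R q K : ℝ} (hR : 0 ≤ R) (h : ∀ m : ℕ, R ^ m ≤ K * q ^ m) :
    R ≤ q := by
  by_contra! hqR
  have hK : 1 ≤ K := by simpa using h 0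
  have hq : 0 ≤ q := nonneg_of_mul_nonneg_right (hR.trans (by simpa using h 1)) (by linarith)
  have hRpos : 0 < R := hq.trans_lt hqR
  obtain ⟨m, hm⟩ :=
    exists_pow_lt_of_lt_one (inv_pos.2 (by linarith : 0 < K)) ((div_lt_one hRpos).2 hqR)
  rw [div_pow, div_lt_iff₀ (pow_pos hRpos m), lt_inv_mul_iff₀ (by linarith)] at hm
  linarith [h m]

namespace Matrix

variable {ι : Type*} [Fintype ι]

theorem sum_mul_apply {α : Type*} [NonUnitalNonAssocSemiring α] (A B : Matrix ι ι α) (x : ι) :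
    ∑ j, (A * B) x j = ∑ z, A x z * ∑ j, B z j := by
  simp_rw [mul_apply, Finset.mul_sum]
  exact Finset.sum_comm

variable [DecidableEq ι]

theorem norm_trace_pow_le (A : Matrix ι ι ℂ) {r : ℝ} (hA : ∀ μ ∈ spectrum ℂ A, ‖μ‖ ≤ r)
    (t : ℕ) : ‖(A ^ t).trace‖ ≤ Fintype.card ι * r ^ t := by
  rcases t.eq_zero_or_pos with rfl | ht
  · simp
  have hroots : ∀ z ∈ (A ^ t).charpoly.roots, ‖z‖ ≤ r ^ t := by
    intro z hz
    have hz : z ∈ spectrum ℂ (A ^ t) := mem_spectrum_iff_isRoot_charpoly.2 (isRoot_of_mem_roots hz)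
    rw [spectrum.map_pow_of_pos A ht] at hz
    obtain ⟨μ, hμ, rfl⟩ := hz
    rw [norm_pow]
    exact pow_le_pow_left₀ (norm_nonneg μ) (hA μ hμ) t
  have hcard : (A ^ t).charpoly.roots.card = Fintype.card ι := by
    rw [splits_iff_card_roots.1 (IsAlgClosed.splits _), charpoly_natDegree_eq_dim]
  rw [trace_eq_sum_roots_charpoly]
  calc ‖(A ^ t).charpoly.roots.sum‖ ≤ ((A ^ t).charpoly.roots.map (‖·‖)).sum :=
        norm_multiset_sum_le _
    _ ≤ ((A ^ t).charpoly.roots.map (‖·‖)).card • r ^ t :=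
        Multiset.sum_le_card_nsmul _ _ (Multiset.forall_mem_map_iff.2 hroots)
    _ = Fintype.card ι * r ^ t := by rw [Multiset.card_map, hcard, nsmul_eq_mul]

variable (M : Matrix ι ι ℕ)

theorem pow_add_apply_pos_iff {a b : ℕ} {i j : ι} :
    0 < (M ^ (a + b)) i j ↔ ∃ z, 0 < (M ^ a) i z ∧ 0 < (M ^ b) z j := by
  simp [pow_add, mul_apply, Finset.sum_pos_iff, CanonicallyOrderedAdd.mul_pos]

theorem pow_mul_apply_pos {g : ℕ} {u : ι} (h : 0 < (M ^ g) u u) (q : ℕ) :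
    0 < (M ^ (g * q)) u u := by
  induction q with
  | zero => simp
  | succ q ih => exact M.pow_add_apply_pos_iff.2 ⟨u, ih, h⟩

theorem exists_lt_card_pow_apply_pos {k : ℕ} {i j : ι} (h : 0 < (M ^ k) i j) :
    ∃ s < Fintype.card ι, 0 < (M ^ s) i j := by
  induction k using Nat.strong_induction_on with
  | _ k ih =>
  by_cases hk : k < Fintype.card ι
  · exact ⟨k, hk, h⟩
  have hmid (a : Fin (k + 1)) : ∃ z, 0 < (M ^ (a : ℕ)) i z ∧ 0 < (M ^ (k - a)) z j :=
    M.pow_add_apply_pos_iff.1 (by rwa [Nat.add_sub_cancel' (Nat.lt_succ_iff.1 a.2)])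
  choose v hv using hmid
  -- a walk of length `k ≥ card ι` visits some vertex twice; cut out the closed walk in between
  obtain ⟨a, b, hab, hv_eq⟩ := Fintype.exists_ne_map_eq_of_card_lt v (by simpa using hk)
  wlog hlt : a < b generalizing a b
  · exact this b a hab.symm hv_eq.symm (lt_of_le_of_ne (not_lt.1 hlt) hab.symm)
  exact ih (a + (k - b)) (by omega) (M.pow_add_apply_pos_iff.2 ⟨v a, (hv a).1, hv_eq ▸ (hv b).2⟩)

theorem exists_pos_le_card_pow_apply_pos (hrow : ∀ i, ∃ j, 0 < M i j)
    (hconn : ∀ i j, ∃ s, 0 < (M ^ s) i j) (u : ι) :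
    ∃ g, 0 < g ∧ g ≤ Fintype.card ι ∧ 0 < (M ^ g) u u := by
  obtain ⟨z, huz⟩ := hrow u
  obtain ⟨_, hzu⟩ := hconn z u
  obtain ⟨s, hs, hzu⟩ := M.exists_lt_card_pow_apply_pos hzu
  exact ⟨1 + s, by omega, by omega, M.pow_add_apply_pos_iff.2 ⟨z, by simpa using huz, hzu⟩⟩

theorem exists_lt_card_pow_card_add_apply_pos (hrow : ∀ i, ∃ j, 0 < M i j)
    (hconn : ∀ i j, ∃ s, 0 < (M ^ s) i j) (x u : ι) :
    ∃ s < Fintype.card ι, 0 < (M ^ (Fintype.card ι + s)) x u := by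
  obtain ⟨_, hxu⟩ := hconn x u
  obtain ⟨a, ha, hxu⟩ := M.exists_lt_card_pow_apply_pos hxu
  obtain ⟨g, hg, hgn, hcyc⟩ := M.exists_pos_le_card_pow_apply_pos hrow hconn u
  obtain ⟨q, hq₁, hq₂⟩ := Nat.exists_add_mul_mem_Ico (Fintype.card ι) hg (a := a) (by omega)
  refine ⟨a + g * q - Fintype.card ι, by omega, ?_⟩
  rw [Nat.add_sub_cancel' hq₁]
  exact M.pow_add_apply_pos_iff.2 ⟨u, hxu, M.pow_mul_apply_pos hcyc q⟩

theorem sum_pow_add_apply (hrow : ∀ i, ∃ j, 0 < M i j) (x : ι) (a m : ℕ) :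
    ∑ j, (M ^ (a + m)) x j =
      ∑ j, (M ^ a) x j + ∑ s ∈ range m, ∑ z, (M ^ (a + s)) x z * (∑ v, M z v - 1) := by
  induction m with
  | zero => simp
  | succ m ih =>
    rw [← add_assoc, pow_succ, sum_mul_apply, sum_range_succ, ← add_assoc, ← ih,
      ← sum_add_distrib]
    refine sum_congr rfl fun z _ => ?_
    obtain ⟨v, hv⟩ := hrow z
    have : 0 < ∑ v, M z v := sum_pos_iff.2 ⟨v, mem_univ v, hv⟩
    rw [mul_tsub, mul_one, Nat.add_sub_cancel' (Nat.le_mul_of_pos_right _ this)]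

theorem sum_add_one_le_sum_pow_two_mul_card_apply_add_card (hrow : ∀ i, ∃ j, 0 < M i j)
    (hconn : ∀ i j, ∃ s, 0 < (M ^ s) i j) (x : ι) :
    ∑ i, ∑ j, M i j + 1 ≤ ∑ j, (M ^ (2 * Fintype.card ι)) x j + Fintype.card ι := by
  set n := Fintype.card ι
  have hwindow := M.exists_lt_card_pow_card_add_apply_pos hrow hconn x
  have hwalk : 0 < ∑ j, (M ^ n) x j := by
    obtain ⟨s, -, hxx⟩ := hwindow x
    obtain ⟨z, hxz, -⟩ := M.pow_add_apply_pos_iff.1 hxx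
    exact sum_pos_iff.2 ⟨z, mem_univ z, hxz⟩
  have hcover : ∑ u, (∑ v, M u v - 1) ≤
      ∑ s ∈ range n, ∑ z, (M ^ (n + s)) x z * (∑ v, M z v - 1) := by
    rw [sum_comm]
    refine sum_le_sum fun u _ => ?_
    obtain ⟨s, hs, hxu⟩ := hwindow u
    calc ∑ v, M u v - 1 ≤ (M ^ (n + s)) x u * (∑ v, M u v - 1) := Nat.le_mul_of_pos_left _ hxu
      _ ≤ ∑ s ∈ range n, (M ^ (n + s)) x u * (∑ v, M u v - 1) :=
        single_le_sum (f := fun s => (M ^ (n + s)) x u * (∑ v, M u v - 1))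
          (fun _ _ => Nat.zero_le _) (mem_range.2 hs)
  have hsum : ∑ i, ∑ j, M i j ≤ ∑ u, (∑ v, M u v - 1) + n :=
    calc ∑ i, ∑ j, M i j ≤ ∑ u, ((∑ v, M u v - 1) + 1) := sum_le_sum fun u _ => le_tsub_add
      _ = ∑ u, (∑ v, M u v - 1) + n := by simp [sum_add_distrib, n]
  rw [two_mul, M.sum_pow_add_apply hrow x n n]
  omega

theorem pow_le_sum_pow_mul_apply {R t : ℕ} (hR : ∀ i, R ≤ ∑ j, (M ^ t) i j) (m : ℕ) (x : ι) :
    R ^ m ≤ ∑ j, (M ^ (t * m)) x j := by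
  induction m generalizing x with
  | zero => simp [one_apply]
  | succ m ih =>
    calc R ^ (m + 1) = R ^ m * R := pow_succ R m
      _ ≤ R ^ m * ∑ z, (M ^ t) x z := Nat.mul_le_mul_left _ (hR x)
      _ = ∑ z, (M ^ t) x z * R ^ m := by rw [mul_sum]; simp_rw [mul_comm]
      _ ≤ ∑ z, (M ^ t) x z * ∑ j, (M ^ (t * m)) z j :=
        sum_le_sum fun z _ => Nat.mul_le_mul_left _ (ih z)
      _ = ∑ j, (M ^ (t * (m + 1))) x j := by rw [mul_add_one, add_comm, pow_add, sum_mul_apply]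

theorem sum_pow_apply_le_trace_pow_add {k : ℕ} (hk : ∀ i j, 0 < (M ^ k) i j) (t : ℕ) (x : ι) :
    ∑ j, (M ^ t) x j ≤ (M ^ (t + k)).trace :=
  calc ∑ j, (M ^ t) x j ≤ ∑ j, (M ^ t) x j * (M ^ k) j x :=
        sum_le_sum fun j _ => Nat.le_mul_of_pos_right _ (hk j x)
    _ = (M ^ (t + k)) x x := by rw [pow_add, mul_apply]
    _ ≤ (M ^ (t + k)).trace :=
        single_le_sum (f := fun i => (M ^ (t + k)) i i) (fun _ _ => Nat.zero_le _) (mem_univ x)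

theorem natCast_trace_pow_le {r : ℝ} (hr : ∀ μ ∈ spectrum ℂ (M.map (Nat.cast : ℕ → ℂ)), ‖μ‖ ≤ r)
    (t : ℕ) : ((M ^ t).trace : ℝ) ≤ Fintype.card ι * r ^ t := by
  have h := (M.map (Nat.castRingHom ℂ)).norm_trace_pow_le hr t
  rwa [← Matrix.map_pow, ← AddMonoidHom.map_trace, eq_natCast, Complex.norm_natCast] at h

theorem natCast_le_pow_of_le_sum_pow_apply [Nonempty ι] {k t R : ℕ} {r : ℝ}
    (hk : ∀ i j, 0 < (M ^ k) i j) (hr : ∀ μ ∈ spectrum ℂ (M.map (Nat.cast : ℕ → ℂ)), ‖μ‖ ≤ r)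
    (hR : ∀ i, R ≤ ∑ j, (M ^ t) i j) : (R : ℝ) ≤ r ^ t := by
  obtain ⟨x⟩ := ‹Nonempty ι›
  refine le_of_forall_pow_le_mul_pow (K := Fintype.card ι * r ^ k) R.cast_nonneg fun m => ?_
  calc (R : ℝ) ^ m ≤ ((M ^ (t * m + k)).trace : ℝ) := by
        exact_mod_cast
          (M.pow_le_sum_pow_mul_apply hR m x).trans (M.sum_pow_apply_le_trace_pow_add hk _ x)
    _ ≤ Fintype.card ι * r ^ (t * m + k) := M.natCast_trace_pow_le hr _
    _ = Fintype.card ι * r ^ k * (r ^ t) ^ m := by ring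

-- `M ^ 0 = 1` is positive only if `card ι ≤ 1`, so with a zero row `M` is the `1 × 1` zero matrix.
theorem sum_add_one_le_card_of_row_eq_zero {k : ℕ} (hk : ∀ i j, 0 < (M ^ k) i j) {u : ι}
    (hu : ∀ j, M u j = 0) : ∑ i, ∑ j, M i j + 1 ≤ Fintype.card ι := by
  obtain rfl : k = 0 := by
    by_contra hk0
    obtain ⟨z, hz, -⟩ := (M.pow_add_apply_pos_iff (a := 1) (b := k - 1)).1
      (by rw [Nat.add_sub_cancel' (Nat.one_le_iff_ne_zero.2 hk0)]; exact hk u u)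
    simp [hu] at hz
  have : Subsingleton ι :=
    ⟨fun i j => by_contra fun hij => by simpa [one_apply_ne hij] using hk i j⟩
  rw [Fintype.sum_subsingleton _ u, Fintype.sum_subsingleton _ u, hu, zero_add]
  exact Fintype.card_pos_iff.2 ⟨u⟩

theorem aeval_charpoly_eq_zero_of_mem_spectrum {μ : ℂ}
    (hμ : μ ∈ spectrum ℂ (M.map (Nat.cast : ℕ → ℂ))) :
    aeval μ (M.map (Nat.cast : ℕ → ℤ)).charpoly = 0 := by
  have hmap : M.map (Nat.cast : ℕ → ℂ) = (M.map (Nat.cast : ℕ → ℤ)).map (Int.castRingHom ℂ) := by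
    ext i j; simp
  rw [hmap, mem_spectrum_iff_isRoot_charpoly, charpoly_map, IsRoot, eval_map] at hμ
  rwa [aeval_def]

end Matrix

open Matrix

theorem ham_song_complexity_bound_general
    (n : ℕ) (M : Matrix (Fin n) (Fin n) ℕ)
    (hprim : ∃ k : ℕ, ∀ i j, 0 < (M ^ k) i j)
    (lam : ℝ)
    (hmax : ∀ μ : ℂ, aeval μ ((M.map (Nat.cast : ℕ → ℤ)).charpoly) = 0 →
      ‖μ‖ ≤ lam) :
    (∑ i, ∑ j, (M i j : ℝ)) - n ≤ lam ^ (2 * n) - 1 := by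
  rcases n.eq_zero_or_pos with rfl | hn
  · simp
  have : NeZero n := ⟨hn.ne'⟩
  obtain ⟨k, hk⟩ := hprim
  suffices h : ((∑ i, ∑ j, M i j + 1 - n : ℕ) : ℝ) ≤ lam ^ (2 * n) by
    have := Nat.cast_le (α := ℝ).2 (le_tsub_add (b := ∑ i, ∑ j, M i j + 1) (a := n))
    push_cast at this ⊢
    linarith
  by_cases hrow : ∀ i, ∃ j, 0 < M i j
  · refine M.natCast_le_pow_of_le_sum_pow_apply hk
      (fun μ hμ => hmax μ (M.aeval_charpoly_eq_zero_of_mem_spectrum hμ)) fun x => ?_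
    have := M.sum_add_one_le_sum_pow_two_mul_card_apply_add_card hrow (fun i j => ⟨k, hk i j⟩) x
    rw [Fintype.card_fin] at this
    omega
  · push Not at hrow
    obtain ⟨u, hu⟩ := hrow
    have := M.sum_add_one_le_card_of_row_eq_zero hk (u := u) (fun j => Nat.le_zero.1 (hu j))
    rw [Fintype.card_fin] at this
    rw [Nat.sub_eq_zero_of_le this, Nat.cast_zero]
    exact (even_two_mul n).pow_nonneg lam

theorem ham_song_complexity_bound
    (n : ℕ) (M : Matrix (Fin n) (Fin n) ℕ)
    (hprim : ∃ k : ℕ, ∀ i j, 0 < (M ^ k) i j)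
    (lam : ℝ)
    (hroot : aeval (lam : ℂ) ((M.map (Nat.cast : ℕ → ℤ)).charpoly) = 0)
    (hmax : ∀ μ : ℂ, aeval μ ((M.map (Nat.cast : ℕ → ℤ)).charpoly) = 0 →
      ‖μ‖ ≤ lam) :
    (∑ i, ∑ j, (M i j : ℝ)) - n ≤ lam ^ (2 * n) - 1 :=
  ham_song_complexity_bound_general n M hprim lam hmax
end

section
/- For fixed integer a > 0, if λ_{a,n} denotes the largest real root of LT_{a,n}(t) = t^{2n} - t^{n+a} - t^n - t^{n-a} + 1 (for n > a), then λ_{a,n}^{2n} → ((3+√5)/2)^2 = γ_0^4 as n → ∞. -/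
/-!
Put `x = λ^n` and `b = λ^a`. Dividing `LT_{a,n}(λ) = 0` by `λ^n` gives
`x + x⁻¹ = b + 1 + b⁻¹`, so `x` is the larger root of `X² - sX + 1` with `s = b + 1 + b⁻¹`.
The equation also gives `λ^{n+a} λ^{n-a} < 3 λ^{n+a}`, i.e. `λ^{n-a} < 3`, hence `λ → 1` by
Bernoulli's inequality, so `s → 3` and `x` tends to the larger root of `X² - 3X + 1`, which is `φ²`.
-/

open Filter Topology Real goldenRatio

theorem pow_sub_le_three_of_root {t : ℝ} {a n : ℕ} (ht : 1 ≤ t) (han : a ≤ n)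
    (h : t ^ (2 * n) - t ^ (n + a) - t ^ n - t ^ (n - a) + 1 = 0) : t ^ (n - a) ≤ 3 := by
  have h_mul : t ^ (2 * n) = t ^ (n + a) * t ^ (n - a) := by
    rw [← pow_add]; congr 1; omega
  have h_n : t ^ n ≤ t ^ (n + a) := pow_le_pow_right₀ ht (by omega)
  have h_sub : t ^ (n - a) ≤ t ^ (n + a) := pow_le_pow_right₀ ht (by omega)
  nlinarith [one_le_pow₀ (n := n + a) ht]

theorem pow_add_inv_eq_of_root {t : ℝ} {a n : ℕ} (ht : t ≠ 0) (han : a ≤ n)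
    (h : t ^ (2 * n) - t ^ (n + a) - t ^ n - t ^ (n - a) + 1 = 0) :
    t ^ n + (t ^ n)⁻¹ = t ^ a + 1 + (t ^ a)⁻¹ := by
  have hx : t ^ n ≠ 0 := pow_ne_zero n ht
  have hb : t ^ a ≠ 0 := pow_ne_zero a ht
  rw [two_mul, pow_add, pow_add, pow_sub₀ t ht han] at h
  generalize t ^ n = x at *
  generalize t ^ a = b at *
  field_simp at h ⊢
  linear_combination h

/-- The inverse of `x ↦ x + x⁻¹` on `[1, ∞)`. -/
noncomputable def addInvInv (s : ℝ) : ℝ := (s + √(s ^ 2 - 4)) / 2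

theorem continuous_addInvInv : Continuous addInvInv := by
  unfold addInvInv
  fun_prop

theorem addInvInv_add_inv {x : ℝ} (hx : 1 ≤ x) : addInvInv (x + x⁻¹) = x := by
  have hx0 : x ≠ 0 := by positivity
  have hinv : x⁻¹ ≤ x := (inv_le_one_of_one_le₀ hx).trans hx
  have hsq : (x + x⁻¹) ^ 2 - 4 = (x - x⁻¹) ^ 2 := by
    field_simp
    ring
  rw [addInvInv, hsq, sqrt_sq (sub_nonneg.2 hinv)]
  ring

theorem addInvInv_three : addInvInv 3 = φ ^ 2 := by
  have h : φ ^ 2 + (φ ^ 2)⁻¹ = 3 := by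
    rw [← inv_pow, inv_goldenRatio, neg_sq, goldenRatio_sq, goldenConj_sq]
    linear_combination goldenRatio_add_goldenConj
  rw [← h, addInvInv_add_inv (one_le_pow₀ one_lt_goldenRatio.le)]

theorem tendsto_one_of_pow_le {α : Type*} {l : Filter α} {u : α → ℝ} {k : α → ℕ} {C : ℝ}
    (hk : Tendsto k l atTop) (hu : ∀ᶠ i in l, 1 ≤ u i) (hC : ∀ᶠ i in l, u i ^ k i ≤ C) :
    Tendsto u l (𝓝 1) := by
  have hbound : Tendsto (fun i => 1 + (C - 1) / k i) l (𝓝 1) := by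
    simpa using ((tendsto_const_div_atTop_nhds_zero_nat (C - 1)).comp hk).const_add 1
  refine tendsto_of_tendsto_of_tendsto_of_le_of_le' tendsto_const_nhds hbound hu ?_
  filter_upwards [hu, hC, hk.eventually_gt_atTop 0] with i hui hCi hki
  have hbern : 1 + k i * (u i - 1) ≤ C := by
    have := one_add_mul_le_pow (a := u i - 1) (by linarith) (k i)
    rw [add_sub_cancel] at this
    exact this.trans hCi
  have hk_pos : (0 : ℝ) < k i := by exact_mod_cast hki
  rw [← sub_le_iff_le_add', le_div_iff₀ hk_pos]
  linarith

theorem LTa_root_pow_tendsto_golden_fourth_general (a : ℕ) (lam : ℕ → ℝ)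
    (hlam : ∀ n, a < n → 1 < lam n ∧
      (lam n) ^ (2 * n) - (lam n) ^ (n + a) - (lam n) ^ n - (lam n) ^ (n - a) + 1 = 0) :
    Tendsto (fun n => (lam n) ^ (2 * n)) atTop
      (nhds (((1 + Real.sqrt 5) / 2) ^ 4)) := by
  have hlam_one : Tendsto lam atTop (𝓝 1) := by
    refine tendsto_one_of_pow_le (C := 3) (tendsto_sub_atTop_nat a) ?_ ?_ <;>
      filter_upwards [eventually_gt_atTop a] with n hn
    · exact (hlam n hn).1.le
    · exact pow_sub_le_three_of_root (hlam n hn).1.le hn.le (hlam n hn).2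
  have hpow_a : Tendsto (fun n => lam n ^ a) atTop (𝓝 1) := by
    simpa using hlam_one.pow a
  have hs : Tendsto (fun n => lam n ^ a + 1 + (lam n ^ a)⁻¹) atTop (𝓝 3) := by
    convert (hpow_a.add_const 1).add (hpow_a.inv₀ one_ne_zero) using 2
    norm_num
  have hx : Tendsto (fun n => lam n ^ n) atTop (𝓝 (φ ^ 2)) := by
    rw [← addInvInv_three]
    refine (continuous_addInvInv.tendsto 3).comp hs |>.congr' ?_
    filter_upwards [eventually_gt_atTop a] with n hn
    obtain ⟨h1, hroot⟩ := hlam n hn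
    rw [Function.comp_apply, ← pow_add_inv_eq_of_root (by positivity) hn.le hroot,
      addInvInv_add_inv (one_le_pow₀ h1.le)]
  convert hx.pow 2 using 2 <;> ring

theorem LTa_root_pow_tendsto_golden_fourth (a : ℕ) (ha : 0 < a) (lam : ℕ → ℝ)
    (hlam : ∀ n, a < n → 1 < lam n ∧
      (lam n) ^ (2 * n) - (lam n) ^ (n + a) - (lam n) ^ n - (lam n) ^ (n - a) + 1 = 0) :
    Tendsto (fun n => (lam n) ^ (2 * n)) atTop
      (nhds (((1 + Real.sqrt 5) / 2) ^ 4)) :=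
  LTa_root_pow_tendsto_golden_fourth_general a lam hlam
end
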